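/- Let L ⊆ F be fields and let T = L + XF[X]. For f ∈ T, the element f is squarefree in T if and only if either f is squarefree in the polynomial ring F[X], or f = X²h for some h ∈ F[X] that is squarefree in F[X] and whose constant coefficient h(0) is not of the form a²b with a ∈ F and b ∈ L. In other words, Sqf T = (Sqf F[X] ∩ T) ∪ {X²h : h ∈ Sqf F[X], h(0) ∉ {a²b : a ∈ F, b ∈ L}}. -/

import Mathlib

/-!
The units of `T` are the nonzero constants in `L`. A factorisation `y * y * g` in `F[X]` can be
rescaled to `(a y) * (a y) * (a⁻² g)` for `a ∈ Fˣ`; when `y(0) ≠ 0`, the choice `a = y(0)⁻¹` puts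
both factors in `T`, so squares prime to `X` divide `f` in `T` iff they do in `F[X]`. Hence a
squarefree `f ∈ T` that is not squarefree in `F[X]` is `X² h` with `X ∤ h`, and the remaining
square divisors `(a X)²` divide `f` in `T` exactly when `a⁻² h(0) ∈ L`.
-/
/-- The composite `T = A + X B[X]` for a subfield `A` of a field `B`: the subring
(an integral domain) of the polynomial ring `B[X]` consisting of all polynomials
whose constant coefficient lies in `A`. -/
def fieldComposite (B : Type*) [Field B] (A : Subfield B) :
    Subring (Polynomial B) where
  carrier := {f | f.coeff 0 ∈ A}
  zero_mem' := by simpa using zero_mem A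
  one_mem' := by simpa using one_mem A
  add_mem' := fun hf hg => by
    simpa [Polynomial.coeff_add] using add_mem hf hg
  neg_mem' := fun hf => by
    simpa [Polynomial.coeff_neg] using neg_mem (s := A) hf
  mul_mem' := fun hf hg => by
    simpa [Polynomial.mul_coeff_zero] using mul_mem hf hg

open Polynomial

namespace fieldComposite

variable {F : Type*} [Field F] {L : Subfield F}

theorem mem_iff {p : F[X]} : p ∈ fieldComposite F L ↔ p.coeff 0 ∈ L := Iff.rfl

theorem isUnit_coe_iff {y : fieldComposite F L} : IsUnit (y : F[X]) ↔ IsUnit y := by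
  refine ⟨fun hy => ?_, fun hy => hy.map (fieldComposite F L).subtype⟩
  obtain ⟨c, hc, hyc⟩ := Polynomial.isUnit_iff.mp hy
  have hcL : c ∈ L := by simpa [← hyc] using mem_iff.mp y.2
  have hinv : C c⁻¹ ∈ fieldComposite F L := mem_iff.mpr (by simpa using L.inv_mem hcL)
  refine .of_mul_eq_one ⟨C c⁻¹, hinv⟩ (Subtype.ext ?_)
  simp [← hyc, ← C_mul, mul_inv_cancel₀ hc.ne_zero]

theorem squarefree_of_squarefree_coe {f : fieldComposite F L} (hf : Squarefree (f : F[X])) :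
    Squarefree f := fun y ⟨g, hg⟩ =>
  isUnit_coe_iff.mp (hf y ⟨g, by simpa using congrArg Subtype.val hg⟩)

theorem isUnit_of_squarefree_of_eq_mul_self_mul {f : fieldComposite F L} (hf : Squarefree f)
    {y g : F[X]} (hfyg : (f : F[X]) = y * y * g) {a : F} (ha : a ≠ 0)
    (hy : a * y.coeff 0 ∈ L) (hg : g.coeff 0 / a ^ 2 ∈ L) : IsUnit y := by
  let y' : fieldComposite F L := ⟨C a * y, mem_iff.mpr (by simpa using hy)⟩
  let g' : fieldComposite F L :=
    ⟨C (a ^ 2)⁻¹ * g, mem_iff.mpr (by simpa [div_eq_inv_mul] using hg)⟩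
  have hdvd : y' * y' ∣ f := ⟨g', Subtype.ext <| by
    simp only [y', g', Subring.coe_mul, hfyg]
    rw [show C a * y * (C a * y) * (C (a ^ 2)⁻¹ * g) = C (a ^ 2 * (a ^ 2)⁻¹) * (y * y * g) by
      simp only [C_mul, C_pow]; ring]
    simp [mul_inv_cancel₀ (pow_ne_zero 2 ha)]⟩
  exact isUnit_of_mul_isUnit_right (isUnit_coe_iff.mpr (hf y' hdvd))

theorem isUnit_of_squarefree_of_mul_self_dvd {f : fieldComposite F L} (hf : Squarefree f)
    {y : F[X]} (hy : y * y ∣ (f : F[X])) (hy0 : y.coeff 0 ≠ 0) : IsUnit y := by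
  obtain ⟨g, hg⟩ := hy
  refine isUnit_of_squarefree_of_eq_mul_self_mul hf hg (inv_ne_zero hy0)
    (by simp [inv_mul_cancel₀ hy0, one_mem]) ?_
  have hf0 := mem_iff.mp f.2
  rw [hg, mul_coeff_zero, mul_coeff_zero] at hf0
  convert hf0 using 1
  field_simp

theorem X_sq_dvd_of_squarefree_of_not_squarefree_coe {f : fieldComposite F L}
    (hf : Squarefree f) (hfX : ¬Squarefree (f : F[X])) : X ^ 2 ∣ (f : F[X]) := by
  obtain ⟨y, hy, hyu⟩ := not_forall₂.mp hfX
  have hXy : X ∣ y := X_dvd_iff.mpr <| by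
    by_contra hy0
    exact hyu (isUnit_of_squarefree_of_mul_self_dvd hf hy hy0)
  rw [sq]
  exact (mul_dvd_mul hXy hXy).trans hy

theorem not_exists_coeff_zero_eq_sq_mul_of_squarefree {f : fieldComposite F L}
    (hf : Squarefree f) {h : F[X]} (hfh : (f : F[X]) = X ^ 2 * h) :
    ¬∃ a b : F, b ∈ L ∧ h.coeff 0 = a ^ 2 * b := by
  rintro ⟨a, b, hb, hab⟩
  -- The rescaling needs `a ≠ 0`; for `a = 0` use `h(0) = 1 ^ 2 * 0` instead.
  obtain ⟨a', ha', hh⟩ : ∃ a' : F, a' ≠ 0 ∧ h.coeff 0 / a' ^ 2 ∈ L := by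
    rcases eq_or_ne a 0 with rfl | ha
    · exact ⟨1, one_ne_zero, by simp [hab, zero_mem]⟩
    · exact ⟨a, ha, by rwa [hab, mul_div_cancel_left₀ b (pow_ne_zero 2 ha)]⟩
  exact not_isUnit_X <| isUnit_of_squarefree_of_eq_mul_self_mul hf (by rw [hfh, sq]) ha'
    (by simp [zero_mem]) hh

theorem squarefree_of_squarefree_of_eq_X_sq_mul {f : fieldComposite F L} (hf : Squarefree f)
    {h : F[X]} (hfh : (f : F[X]) = X ^ 2 * h) (hh0 : h.coeff 0 ≠ 0) : Squarefree h := by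
  intro z hz
  refine isUnit_of_squarefree_of_mul_self_dvd hf (hz.trans ⟨X ^ 2, by rw [hfh, mul_comm]⟩) ?_
  exact fun hz0 => hh0 <| X_dvd_iff.mp <| (X_dvd_iff.mpr hz0).trans <| (dvd_mul_right z z).trans hz

theorem squarefree_of_eq_X_sq_mul {f : fieldComposite F L} {h : F[X]}
    (hfh : (f : F[X]) = X ^ 2 * h) (hh : Squarefree h)
    (hne : ¬∃ a b : F, b ∈ L ∧ h.coeff 0 = a ^ 2 * b) : Squarefree f := by
  rintro y ⟨g, hg⟩
  have hyg : (y : F[X]) * (y : F[X]) * (g : F[X]) = X ^ 2 * h := by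
    rw [← hfh, hg]; rfl
  rw [← isUnit_coe_iff]
  by_cases hy0 : (y : F[X]).coeff 0 = 0
  · obtain ⟨y₁, hy₁⟩ := X_dvd_iff.mpr hy0
    have hh' : y₁ * y₁ * g = h :=
      mul_left_cancel₀ (pow_ne_zero 2 X_ne_zero) (by rw [← hyg, hy₁]; ring)
    obtain ⟨a, -, ha⟩ := Polynomial.isUnit_iff.mp (hh y₁ ⟨g, hh'.symm⟩)
    refine absurd ⟨a, (g : F[X]).coeff 0, mem_iff.mp g.2, ?_⟩ hne
    rw [← hh', ← ha, mul_coeff_zero, mul_coeff_zero, coeff_C_zero, sq]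
  · have hcop : IsCoprime (y : F[X]) X :=
      (irreducible_X.coprime_iff_not_dvd.mpr (mt X_dvd_iff.mp hy0)).symm
    exact hh y <| ((hcop.mul_left hcop).pow_right).dvd_of_dvd_mul_left ⟨g, hyg.symm⟩

end fieldComposite

/-- Let `L ⊆ F` be fields and let `T = L + X F[X]`.  For `f ∈ T`, the
element `f` is squarefree in `T` if and only if either `f` is squarefree in the
polynomial ring `F[X]`, or `f = X² h` for some `h ∈ F[X]` which is squarefree in
`F[X]` and whose constant coefficient `h(0)` is not of the form `a² b` with `a ∈ F`
and `b ∈ L`. -/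
theorem squarefree_fieldComposite_iff (F : Type*) [Field F] (L : Subfield F)
    (f : fieldComposite F L) :
    Squarefree f ↔
      Squarefree (f : Polynomial F) ∨
        ∃ h : Polynomial F,
          (f : Polynomial F) = Polynomial.X ^ 2 * h ∧ Squarefree h ∧
            ¬ ∃ (a : F) (b : F), b ∈ L ∧ h.coeff 0 = a ^ 2 * b := by
  open fieldComposite in
  refine ⟨fun hf => or_iff_not_imp_left.mpr fun hfX => ?_, ?_⟩
  · obtain ⟨h, hfh⟩ := X_sq_dvd_of_squarefree_of_not_squarefree_coe hf hfX
    have hne := not_exists_coeff_zero_eq_sq_mul_of_squarefree hf hfh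
    have hh0 : h.coeff 0 ≠ 0 := fun hh0 => hne ⟨1, 0, zero_mem L, by simp [hh0]⟩
    exact ⟨h, hfh, squarefree_of_squarefree_of_eq_X_sq_mul hf hfh hh0, hne⟩
  · rintro (hfX | ⟨h, hfh, hh, hne⟩)
    · exact squarefree_of_squarefree_coe hfX
    · exact squarefree_of_eq_X_sq_mul hfh hh hne
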